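/- For any h > 0 and any real data values f_A, f_B, f_C, f_D, f_E, f_F, the bivariate quadratic polynomial p(x,y) with the stated coefficients satisfies the six interpolation conditions p(A) = f_A, p(B) = f_B, p(C) = f_C, p(D) = f_D, p(E) = f_E, p(F) = f_F. -/
import Mathlib


set_option linter.unusedVariables false
set_option maxHeartbeats 2000000

/-- √3 -/
noncomputable def s3 : ℝ := Real.sqrt 3

/-- Vertices of the equilateral triangle of side `2h` and the midpoints of its sides. -/
noncomputable def ptA (h : ℝ) : ℝ × ℝ := (-h, s3 / 2 * h)
noncomputable def ptB (h : ℝ) : ℝ × ℝ := (-h / 2, 0)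
noncomputable def ptC (h : ℝ) : ℝ × ℝ := (0, -(s3 / 2 * h))
noncomputable def ptD (h : ℝ) : ℝ × ℝ := (h / 2, 0)
noncomputable def ptE (h : ℝ) : ℝ × ℝ := (h, s3 / 2 * h)
noncomputable def ptF (h : ℝ) : ℝ × ℝ := (0, s3 / 2 * h)

/-- Coefficients of the quadratic interpolant. -/
noncomputable def a00 (h fA fB fC fD fE fF : ℝ) : ℝ := 4 / 9 * (fB + fD + fF) - 1 / 9 * (fA + fC + fE)
noncomputable def a10 (h fA fB fC fD fE fF : ℝ) : ℝ := (-fA - 4 * fB + 4 * fD + fE) / (6 * h)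
noncomputable def a01 (h fA fB fC fD fE fF : ℝ) : ℝ := s3 / (18 * h) * (fA - 4 * fB - 2 * fC - 4 * fD + fE + 8 * fF)
noncomputable def a20 (h fA fB fC fD fE fF : ℝ) : ℝ := (fA - 2 * fF + fE) / (2 * h ^ 2)
noncomputable def a11 (h fA fB fC fD fE fF : ℝ) : ℝ := -(s3 / (3 * h ^ 2)) * (fA - 2 * fB + 2 * fD - fE)
noncomputable def a02 (h fA fB fC fD fE fF : ℝ) : ℝ := (fA - 4 * fB + 4 * fC - 4 * fD + fE + 2 * fF) / (6 * h ^ 2)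

/-- The quadratic interpolant `p(x,y)`. -/
noncomputable def interp (h fA fB fC fD fE fF x y : ℝ) : ℝ :=
  a00 h fA fB fC fD fE fF + a10 h fA fB fC fD fE fF * x
    + a01 h fA fB fC fD fE fF * (y - s3 / 6 * h)
    + a20 h fA fB fC fD fE fF * x ^ 2
    + a11 h fA fB fC fD fE fF * x * (y - s3 / 6 * h)
    + a02 h fA fB fC fD fE fF * (y - s3 / 6 * h) ^ 2

/-- The quadratic `p` interpolates the data at the six points `A, B, C, D, E, F`. -/
theorem interp_conditions (h : ℝ) (hh : 0 < h) (fA fB fC fD fE fF : ℝ) :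
    interp h fA fB fC fD fE fF (ptA h).1 (ptA h).2 = fA ∧
    interp h fA fB fC fD fE fF (ptB h).1 (ptB h).2 = fB ∧
    interp h fA fB fC fD fE fF (ptC h).1 (ptC h).2 = fC ∧
    interp h fA fB fC fD fE fF (ptD h).1 (ptD h).2 = fD ∧
    interp h fA fB fC fD fE fF (ptE h).1 (ptE h).2 = fE ∧
    interp h fA fB fC fD fE fF (ptF h).1 (ptF h).2 = fF := by
  have hs3 : s3 ^ 2 = 3 := Real.sq_sqrt (by norm_num)
  have hne : h ≠ 0 := ne_of_gt hh
  refine ⟨?_, ?_, ?_, ?_, ?_, ?_⟩ <;>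
    simp only [interp, ptA, ptB, ptC, ptD, ptE, ptF, a00, a10, a01, a20, a11, a02] <;>
    field_simp <;> ring_nf <;> rw [hs3] <;> ring
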